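/- arXiv:2509.26154 — 2 statements merged into one kernel-verified Lean document; each statement's English description precedes it below -/
import Mathlib

section
/- Let $K$ be a field, $\xi \in K$ a nonzero element, and $t, i, j \in \mathbb{Z}$. Define $R(k,l) = \xi^{t(j-l)} - \xi^{t(k-1)-i}$ for $0 \le l < k$ and $R(k,k) = 1$. Define $\lambda(k,l)$ recursively by $\lambda(0,0) = 1$, and for $k \ge 1$: $\lambda(k,0) = R(k,0)\lambda(k-1,0)$, $\lambda(k,l) = R(k,l)\lambda(k-1,l) + \lambda(k-1,l-1)$ for $0 < l < k$, and $\lambda(k,k) = 1$. Then for all $0 \le p \le k$, $\lambda(k,p) = \binom{k}{p}_{\xi^t} \cdot \xi^{-t(k-p)p} \cdot \prod_{l=p+1}^{k} R(l,0)$, where $\binom{k}{p}_{q}$ denotes the Gaussian ($q$-)binomial coefficient evaluated at $q = \xi^t$, and the empty product (when $p = k$) equals $1$. -/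
/-- Gaussian (q-)binomial coefficient, via the q-Pascal recursion
`C(n+1,p+1)_q = C(n,p)_q + q^(p+1) * C(n,p+1)_q`. -/
def qBinom {A : Type*} [Ring A] (q : A) : ℕ → ℕ → A
  | _, 0 => 1
  | 0, _ + 1 => 0
  | n + 1, p + 1 => qBinom q n p + q ^ (p + 1) * qBinom q n (p + 1)

/-- `R(k,l) = ξ^{t(j-l)} - ξ^{t(k-1)-i}` for `l < k`, and `R(k,k) = 1`. -/
def Rc {K : Type*} [Field K] (ξ : K) (t i j : ℤ) (k l : ℕ) : K :=
  if l < k then ξ ^ (t * (j - (l : ℤ))) - ξ ^ (t * ((k : ℤ) - 1) - i) else 1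

/-- The recursively defined coefficients `λ(k,l)`. -/
def lam {K : Type*} [Field K] (ξ : K) (t i j : ℤ) : ℕ → ℕ → K
  | 0, 0 => 1
  | 0, _ + 1 => 0
  | k + 1, 0 => Rc ξ t i j (k + 1) 0 * lam ξ t i j k 0
  | k + 1, l + 1 =>
      if l + 1 = k + 1 then 1
      else if l + 1 < k + 1 then
        Rc ξ t i j (k + 1) (l + 1) * lam ξ t i j k (l + 1) + lam ξ t i j k l
      else 0

/-!
Write `q = ξ^t`, `a = ξ^(tj)` and `w = ξ^(-i)`. Then `R(k+1,l) = a q^(-l) - q^k w` for `l ≤ k`,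
so after cancelling the common product `∏ R(l,0)` the inductive step for the closed form is an
identity linear in `a` and `w`. Comparing the coefficients of `a` gives the `q`-Pascal rule
`[k+1, m+1] = [k, m+1] + q^(k-m) [k, m]`, and comparing those of `w` gives its mirror image
`[k+1, m+1] = [k, m] + q^(m+1) [k, m+1]`.
-/

namespace qBinom

variable {A : Type*} [CommRing A] (q : A)

@[simp]
lemma zero_right (n : ℕ) : qBinom q n 0 = 1 := by cases n <;> rfl

lemma succ_succ (n p : ℕ) :
    qBinom q (n + 1) (p + 1) = qBinom q n p + q ^ (p + 1) * qBinom q n (p + 1) := rfl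

lemma eq_zero_of_lt {n p : ℕ} (h : n < p) : qBinom q n p = 0 := by
  induction n generalizing p with
  | zero => obtain ⟨p, rfl⟩ := Nat.exists_eq_add_one_of_ne_zero (by omega : p ≠ 0); rfl
  | succ n ih =>
    obtain ⟨p, rfl⟩ := Nat.exists_eq_add_one_of_ne_zero (by omega : p ≠ 0)
    rw [succ_succ, ih (by omega), ih (by omega), mul_zero, add_zero]

@[simp]
lemma self (n : ℕ) : qBinom q n n = 1 := by
  induction n with
  | zero => rfl
  | succ n ih => rw [succ_succ, ih, eq_zero_of_lt q n.lt_succ_self, mul_zero, add_zero]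

lemma succ_succ' (n p : ℕ) :
    qBinom q (n + 1) (p + 1) = qBinom q n (p + 1) + q ^ (n - p) * qBinom q n p := by
  induction n generalizing p with
  | zero => cases p <;> simp [succ_succ, eq_zero_of_lt]
  | succ n ih =>
    cases p with
    | zero =>
      have h0 := ih 0
      simp only [succ_succ, zero_right, Nat.sub_zero] at h0 ⊢
      linear_combination q * h0
    | succ p =>
      have hp := ih p
      have hp1 := ih (p + 1)
      have e0 := succ_succ q (n + 1) (p + 1)
      have e1 := succ_succ q n (p + 1)
      have e2 := succ_succ q n p
      rw [Nat.add_sub_add_right]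
      rcases lt_or_ge p n with h | h
      · obtain ⟨d, rfl⟩ : ∃ d, n = p + 1 + d := ⟨n - (p + 1), by omega⟩
        rw [show p + 1 + d - p = d + 1 by omega, show p + 1 + d - (p + 1) = d by omega] at *
        linear_combination e0 + hp + q ^ (p + 2) * hp1 - e1 - q ^ (d + 1) * e2
      · rw [eq_zero_of_lt q (by omega : n < p + 1)] at *
        linear_combination e0 + hp + q ^ (p + 2) * hp1 - e1 - q ^ (n - p) * e2

end qBinom

lemma qBinom.succ_succ_div_pow_mul_sub {K : Type*} [Field K] {q : K} (hq : q ≠ 0) (a w : K)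
    {k m : ℕ} (hmk : m < k) :
    qBinom q (k + 1) (m + 1) / q ^ ((k - m) * (m + 1)) * (a - q ^ k * w) =
      (a / q ^ (m + 1) - q ^ k * w) * (qBinom q k (m + 1) / q ^ ((k - (m + 1)) * (m + 1))) +
        qBinom q k m / q ^ ((k - m) * m) * (a - q ^ m * w) := by
  obtain ⟨c, rfl⟩ : ∃ c, k = m + c + 1 := ⟨k - m - 1, by omega⟩
  have h₁ := qBinom.succ_succ' q (m + c + 1) m
  have h₂ := qBinom.succ_succ q (m + c + 1) m
  rw [show m + c + 1 - m = c + 1 by omega] at h₁ ⊢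
  rw [show m + c + 1 - (m + 1) = c by omega]
  field_simp
  linear_combination q ^ ((c + 1) * (2 * m + 1)) * (a * h₁ - q ^ (m + c + 1) * w * h₂)

section lam

variable {K : Type*} [Field K] (ξ : K) (t i j : ℤ)

lemma Rc_succ_of_le (hξ : ξ ≠ 0) {k l : ℕ} (hlk : l ≤ k) :
    Rc ξ t i j (k + 1) l = (ξ ^ t) ^ j / (ξ ^ t) ^ l - (ξ ^ t) ^ k / ξ ^ i := by
  rw [Rc, if_pos (by omega), mul_sub, Nat.cast_succ, add_sub_cancel_right, zpow_sub₀ hξ,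
    zpow_sub₀ hξ]
  simp only [zpow_mul, zpow_natCast]

lemma lam_self (k : ℕ) : lam ξ t i j k k = 1 := by
  cases k <;> simp [lam]

lemma lam_succ_zero (k : ℕ) : lam ξ t i j (k + 1) 0 = Rc ξ t i j (k + 1) 0 * lam ξ t i j k 0 :=
  rfl

lemma lam_succ_succ {k l : ℕ} (hlk : l < k) :
    lam ξ t i j (k + 1) (l + 1) =
      Rc ξ t i j (k + 1) (l + 1) * lam ξ t i j k (l + 1) + lam ξ t i j k l := by
  rw [lam, if_neg (by omega), if_pos (by omega)]

lemma lam_eq_qBinom_div_pow_mul_prod (hξ : ξ ≠ 0) {k p : ℕ} (hpk : p ≤ k) :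
    lam ξ t i j k p =
      qBinom (ξ ^ t) k p / (ξ ^ t) ^ ((k - p) * p) * ∏ l ∈ Finset.Icc (p + 1) k, Rc ξ t i j l 0 := by
  induction k generalizing p with
  | zero => simp [Nat.le_zero.mp hpk, lam]
  | succ k ih =>
    rcases p with _ | p
    · rw [lam_succ_zero, ih (Nat.zero_le k), Finset.prod_Icc_succ_top (by omega)]
      simp only [qBinom.zero_right, mul_zero, pow_zero]
      ring
    obtain hpk | rfl : p < k ∨ p = k := by omega
    · rw [lam_succ_succ ξ t i j hpk, ih (p := p + 1) hpk, ih hpk.le,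
        Finset.prod_Icc_succ_top (by omega),
        ← Finset.mul_prod_Ioc_eq_prod_Icc (by omega : p + 1 ≤ k), ← Finset.Icc_add_one_left_eq_Ioc,
        Rc_succ_of_le ξ t i j hξ (l := p + 1) hpk, Rc_succ_of_le ξ t i j hξ (Nat.zero_le _),
        Rc_succ_of_le ξ t i j hξ (Nat.zero_le _), Nat.add_sub_add_right, pow_zero, div_one]
      have key :=
        qBinom.succ_succ_div_pow_mul_sub (zpow_ne_zero t hξ) ((ξ ^ t) ^ j) (ξ ^ i)⁻¹ hpk
      linear_combination (-∏ l ∈ Finset.Icc (p + 1 + 1) k, Rc ξ t i j l 0) * key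
    · rw [lam_self, qBinom.self, Finset.Icc_eq_empty (by omega)]
      simp

end lam

theorem stmt0 {K : Type*} [Field K] (ξ : K) (hξ : ξ ≠ 0) (t i j : ℤ)
    (k p : ℕ) (hpk : p ≤ k) :
    lam ξ t i j k p =
      qBinom (ξ ^ t) k p * ξ ^ (-(t * ((k : ℤ) - (p : ℤ)) * (p : ℤ))) *
        ∏ l ∈ Finset.Icc (p + 1) k, Rc ξ t i j l 0 := by
  have hexp : -(t * ((k : ℤ) - (p : ℤ)) * (p : ℤ)) = t * -(((k - p) * p : ℕ) : ℤ) := by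
    push_cast [Nat.cast_sub hpk]
    ring
  rw [lam_eq_qBinom_div_pow_mul_prod ξ t i j hξ hpk, hexp, zpow_mul, zpow_neg, zpow_natCast,
    div_eq_mul_inv]
end

section
/- Let $K$ be a field and $w \in K$ a primitive $N$-th root of unity. Fix $i, j \in \mathbb{Z}$ and define $\lambda(k,l) = \binom{k}{l}_{w}\, w^{-(k-l)l} \prod_{s=l+1}^{k}\left(w^{j} - w^{s-1-i}\right)$ for $0 \le l \le k$. Then for every integer $p \ge 1$ and all $0 \le l < pN$, one has $\lambda(pN, l) = 0$. -/
open Polynomial Finset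

lemma qBinom_zero_right {A : Type*} [Ring A] (q : A) (n : ℕ) : qBinom q n 0 = 1 := by
  cases n <;> rfl

lemma qBinom_succ_succ {A : Type*} [Ring A] (q : A) (n k : ℕ) :
    qBinom q (n + 1) (k + 1) = qBinom q n k + q ^ (k + 1) * qBinom q n (k + 1) := rfl

lemma qBinom_eq_zero {A : Type*} [Ring A] (q : A) : ∀ n k, n < k → qBinom q n k = 0
  | 0, _ + 1, _ => rfl
  | n + 1, k + 1, h => by
    rw [qBinom_succ_succ, qBinom_eq_zero q n k (by omega), qBinom_eq_zero q n (k + 1) (by omega)]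
    simp

lemma qBinom_self {A : Type*} [Ring A] (q : A) : ∀ n, qBinom q n n = 1
  | 0 => rfl
  | n + 1 => by
    rw [qBinom_succ_succ, qBinom_self q n, qBinom_eq_zero q n (n + 1) (by omega)]
    simp

/-- The second Pascal-type recursion for the Gaussian binomial. -/
lemma qBinom_succ' {A : Type*} [CommRing A] (q : A) :
    ∀ n k, qBinom q (n + 1) (k + 1) = qBinom q n (k + 1) + q ^ (n - k) * qBinom q n k := by
  intro n
  induction n with
  | zero =>
    intro k
    cases k with
    | zero => simp [qBinom_succ_succ, qBinom_zero_right, qBinom_eq_zero q 0 1 (by omega)]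
    | succ m =>
      rw [qBinom_succ_succ, qBinom_eq_zero q 0 (m + 1) (by omega),
        qBinom_eq_zero q 0 (m + 2) (by omega)]
      simp
  | succ n ih =>
    intro k
    rcases lt_or_ge (n + 1) k with h | h
    · rw [qBinom_eq_zero q (n + 2) (k + 1) (by omega), qBinom_eq_zero q (n + 1) (k + 1) (by omega),
        qBinom_eq_zero q (n + 1) k (by omega)]
      simp
    rcases eq_or_lt_of_le h with rfl | h
    · rw [qBinom_self, qBinom_eq_zero q (n + 1) (n + 2) (by omega), qBinom_self]
      simp
    have hk : k ≤ n := by omega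
    cases k with
    | zero =>
      rw [qBinom_succ_succ q (n + 1) 0, qBinom_zero_right]
      simp only [Nat.sub_zero, Nat.zero_add, zero_add, pow_one]
      have h1 := ih 0
      have h2 := qBinom_succ_succ q n 0
      have h3 := qBinom_zero_right q n
      simp only [Nat.sub_zero, Nat.zero_add, zero_add, pow_one] at h1 h2 h3
      have e : q * q ^ n = q ^ (n + 1) := by rw [← pow_succ']
      linear_combination q * h1 - h2 + (q * q ^ n - 1) * h3 + e
    | succ m =>
      rw [qBinom_succ_succ q (n + 1) (m + 1)]
      simp only [Nat.add_sub_add_right]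
      have hA := ih m
      have hB := ih (m + 1)
      have hA' := qBinom_succ_succ q n m
      have hB' := qBinom_succ_succ q n (m + 1)
      have e1 : q ^ (m + 1 + 1) * q ^ (n - (m + 1)) = q ^ (n + 1) := by
        rw [← pow_add]; congr 1; omega
      have e2 : q ^ (n - m) * q ^ (m + 1) = q ^ (n + 1) := by
        rw [← pow_add]; congr 1; omega
      linear_combination hA + q ^ (m + 1 + 1) * hB - hB' - q ^ (n - m) * hA'
        + qBinom q n (m + 1) * e1 - qBinom q n (m + 1) * e2

/-- Coefficients of the product `∏ (1 + q^s X)` are Gaussian binomials. -/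
lemma coeff_prod_one_add {K : Type*} [Field K] (q : K) :
    ∀ (n : ℕ) (k : ℕ),
      (∏ s ∈ Finset.range n, (1 + Polynomial.C (q ^ s) * Polynomial.X)).coeff k
        = qBinom q n k * q ^ (Nat.choose k 2) := by
  intro n
  induction n with
  | zero =>
    intro k
    cases k with
    | zero => simp [qBinom]
    | succ m => simp [qBinom_eq_zero q 0 (m + 1) (by omega), coeff_one]
  | succ n ih =>
    intro k
    rw [prod_range_succ, mul_add, mul_one, coeff_add]
    rw [mul_left_comm, coeff_C_mul]
    cases k with
    | zero =>
      rw [coeff_mul_X_zero, ih 0]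
      simp [qBinom_zero_right]
    | succ m =>
      rw [coeff_mul_X, ih (m + 1), ih m, qBinom_succ']
      rcases le_or_gt m n with hm | hm
      · have hch : (m + 1).choose 2 = m.choose 2 + m := by
          rw [Nat.choose_succ_succ, Nat.choose_one_right, Nat.add_comm]
        have he : n + m.choose 2 = (n - m) + (m + 1).choose 2 := by omega
        have : q ^ n * q ^ m.choose 2 = q ^ (n - m) * q ^ ((m + 1).choose 2) := by
          rw [← pow_add, ← pow_add, he]
        calc qBinom q n (m + 1) * q ^ (m + 1).choose 2 + q ^ n * (qBinom q n m * q ^ m.choose 2)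
            = qBinom q n (m + 1) * q ^ (m + 1).choose 2
              + (q ^ n * q ^ m.choose 2) * qBinom q n m := by ring
          _ = qBinom q n (m + 1) * q ^ (m + 1).choose 2
              + (q ^ (n - m) * q ^ ((m + 1).choose 2)) * qBinom q n m := by rw [this]
          _ = (qBinom q n (m + 1) + q ^ (n - m) * qBinom q n m) * q ^ (m + 1).choose 2 := by ring
      · rw [qBinom_eq_zero q n m (by omega), qBinom_eq_zero q n (m + 1) (by omega)]
        ring

theorem stmt18 {K : Type*} [Field K] (N : ℕ) (hN : 0 < N)
    (w : K) (hw : IsPrimitiveRoot w N) (i j : ℤ)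
    (p : ℕ) (hp : 1 ≤ p) (l : ℕ) (hl : l < p * N) :
    qBinom w (p * N) l * w ^ (-((((p * N : ℕ) : ℤ) - (l : ℤ)) * (l : ℤ))) *
        ∏ s ∈ Finset.Icc (l + 1) (p * N), (w ^ j - w ^ ((s : ℤ) - 1 - i)) = 0 := by
  have hw0 : w ≠ 0 := hw.ne_zero hN.ne'
  by_cases hcase : l + N ≤ p * N
  · -- zero factor in the product
    set r : ℤ := (i + j - l) % N with hr
    have hr0 : 0 ≤ r := Int.emod_nonneg _ (by exact_mod_cast hN.ne')
    have hrN : r < N := Int.emod_lt_of_pos _ (by exact_mod_cast hN)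
    set s : ℕ := l + 1 + r.toNat with hs
    have hsmem : s ∈ Finset.Icc (l + 1) (p * N) := by
      rw [Finset.mem_Icc]
      constructor
      · omega
      · have : r.toNat < N := by omega
        omega
    have hfac : w ^ j - w ^ ((s : ℤ) - 1 - i) = 0 := by
      have hs' : (s : ℤ) = l + 1 + r := by
        rw [hs]
        push_cast [Int.toNat_of_nonneg hr0]
        ring
      have hdvd : (N : ℤ) ∣ ((s : ℤ) - 1 - i - j) := by
        rw [hs']
        have : (N : ℤ) ∣ (i + j - l) - r := Int.dvd_self_sub_of_emod_eq rfl
        obtain ⟨c, hc⟩ := this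
        exact ⟨-c, by linarith⟩
      have : w ^ ((s : ℤ) - 1 - i - j) = 1 := (hw.zpow_eq_one_iff_dvd _).mpr hdvd
      have : w ^ ((s : ℤ) - 1 - i) = w ^ j := by
        have := congrArg (· * w ^ j) this
        simpa [← zpow_add₀ hw0, sub_add_cancel] using this
      rw [this, sub_self]
    rw [Finset.prod_eq_zero hsmem hfac, mul_zero]
  · -- binomial coefficient vanishes
    have hnd : ¬ (N ∣ l) := by
      rintro ⟨m, rfl⟩
      have hmp : m < p := by
        by_contra hmp
        push_neg at hmp
        have : p * N ≤ N * m := by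
          calc p * N ≤ m * N := Nat.mul_le_mul_right N hmp
          _ = N * m := Nat.mul_comm m N
        omega
      have : N * m + N ≤ p * N := by
        have : N * (m + 1) ≤ N * p := Nat.mul_le_mul_left N hmp
        calc N * m + N = N * (m + 1) := by ring
          _ ≤ N * p := this
          _ = p * N := Nat.mul_comm N p
      exact hcase this
    -- the product over a full period is 1 + c * X^N
    set c : K := ∏ s ∈ Finset.range N, w ^ s with hc
    have hprodN : ∏ s ∈ Finset.range N, (1 + C (w ^ s) * X)
        = C c * X ^ N - C (c * (-1) ^ N) := by
      have key : (X : K[X]) ^ N - C ((-1 : K) ^ N)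
          = ∏ s ∈ Finset.range N, (X - C (w ^ s * (-1))) :=
        X_pow_sub_C_eq_prod hw hN rfl
      have key' : (X : K[X]) ^ N - C ((-1 : K) ^ N)
          = ∏ s ∈ Finset.range N, (X + C (w ^ s)) := by
        rw [key]
        refine Finset.prod_congr rfl fun s _ => ?_
        rw [map_mul, map_neg, map_one, mul_neg_one, sub_neg_eq_add]
      -- reindexing: ∏ (X + C (w^(N-s))) = ∏ (X + C (w^s))
      have hre : ∏ s ∈ Finset.range N, ((X : K[X]) + C (w ^ (N - s)))
          = ∏ s ∈ Finset.range N, ((X : K[X]) + C (w ^ s)) := by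
        have h1 : ∏ s ∈ Finset.range N, ((X : K[X]) + C (w ^ (N - s)))
            = ∏ s ∈ Finset.range N, ((X : K[X]) + C (w ^ (s + 1))) := by
          rw [← Finset.prod_range_reflect (fun t => (X : K[X]) + C (w ^ (t + 1))) N]
          refine Finset.prod_congr rfl fun s hs => ?_
          rw [Finset.mem_range] at hs
          rw [show N - s = N - 1 - s + 1 by omega]
        rw [h1]
        have h2 := Finset.prod_range_succ' (fun t => (X : K[X]) + C (w ^ t)) N
        have h3 := Finset.prod_range_succ (fun t => (X : K[X]) + C (w ^ t)) N
        have h4 : ((X : K[X]) + C (w ^ N)) = X + C (w ^ 0) := by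
          rw [hw.pow_eq_one, pow_zero]
        have h5 : (∏ s ∈ Finset.range N, ((X : K[X]) + C (w ^ (s + 1)))) * (X + C (w ^ 0))
            = (∏ s ∈ Finset.range N, ((X : K[X]) + C (w ^ s))) * (X + C (w ^ 0)) := by
          rw [← h2, h3, h4]
        have hne : (X : K[X]) + C (w ^ 0) ≠ 0 := by
          rw [pow_zero]
          exact X_add_C_ne_zero (1 : K)
        exact mul_right_cancel₀ hne h5
      -- factor each term
      have hfac : ∏ s ∈ Finset.range N, (1 + C (w ^ s) * X)
          = (∏ s ∈ Finset.range N, C (w ^ s))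
            * ∏ s ∈ Finset.range N, ((X : K[X]) + C (w ^ (N - s))) := by
        rw [← Finset.prod_mul_distrib]
        refine Finset.prod_congr rfl fun s hs => ?_
        rw [Finset.mem_range] at hs
        have : w ^ s * w ^ (N - s) = 1 := by
          rw [← pow_add, show s + (N - s) = N by omega, hw.pow_eq_one]
        rw [mul_add, ← map_mul, this, map_one, add_comm]
      rw [hfac, hre, ← key', ← map_prod, ← hc]
      rw [mul_sub]
      simp [map_mul]
    -- blocks
    have hblocks : ∏ s ∈ Finset.range (p * N), (1 + C (w ^ s) * X)
        = (∏ s ∈ Finset.range N, (1 + C (w ^ s) * X)) ^ p := by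
      clear hl hcase hnd hp
      induction p with
      | zero => simp
      | succ p ihp =>
        rw [show (p + 1) * N = p * N + N by ring, Finset.prod_range_add, ihp, pow_succ]
        congr 1
        refine Finset.prod_congr rfl fun s _ => ?_
        congr 2
        rw [pow_add, mul_comm p N, pow_mul, hw.pow_eq_one, one_pow, one_mul]
    -- coefficient of Q^p at l is zero
    have hcoeffzero : ((C c * X ^ N - C (c * (-1) ^ N) : K[X]) ^ p).coeff l = 0 := by
      have : (C c * X ^ N - C (c * (-1) ^ N) : K[X])
          = C c * X ^ N + C (-(c * (-1) ^ N)) := by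
        rw [map_neg]; ring
      rw [this, add_pow, finset_sum_coeff]
      refine Finset.sum_eq_zero fun k _ => ?_
      have hterm : (C c * X ^ N) ^ k * C (-(c * (-1) ^ N)) ^ (p - k) * ((p.choose k : ℕ) : K[X])
          = C (c ^ k * (-(c * (-1) ^ N)) ^ (p - k) * ((p.choose k : ℕ) : K)) * X ^ (N * k) := by
        rw [mul_pow, ← map_pow, ← map_pow, pow_mul, map_mul, map_mul, Polynomial.C_eq_natCast]
        ring
      rw [hterm, coeff_C_mul, coeff_X_pow, if_neg (fun h => hnd ⟨k, h⟩), mul_zero]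
    have hq : qBinom w (p * N) l * w ^ (Nat.choose l 2) = 0 := by
      rw [← coeff_prod_one_add w (p * N) l, hblocks, hprodN, hcoeffzero]
    have hqz : qBinom w (p * N) l = 0 := by
      have := pow_ne_zero (Nat.choose l 2) hw0
      exact (mul_eq_zero.mp hq).resolve_right this
    rw [hqz, zero_mul, zero_mul]
end
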